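/- arXiv:cs/0610047 — 5 statements merged into one kernel-verified Lean document; each statement's English description precedes it below -/
import Mathlib

section
/- If h:[0,1]→ℝ is concave on [0,1], then Th is concave on [0,1]. -/
/-- The binary entropy function with base-2 logarithms (equals 0 at 0 and 1). -/
noncomputable def binH (q : ℝ) : ℝ := -q * Real.logb 2 q - (1 - q) * Real.logb 2 (1 - q)

/-- The expression maximized in the dynamic programming operator. -/
noncomputable def Treward (h : ℝ → ℝ) (δ γ : ℝ) : ℝ :=
  binH ((1 + δ - γ) / 2) + δ + γ - 1
    + ((1 + δ - γ) / 2) * h (2 * δ / (1 + δ - γ))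
    + ((1 - δ + γ) / 2) * h (1 - 2 * γ / (1 - δ + γ))

/-- The dynamic programming operator `T`. -/
noncomputable def Tdp (h : ℝ → ℝ) (z : ℝ) : ℝ :=
  sSup ((fun p : ℝ × ℝ => Treward h p.1 p.2) '' (Set.Icc 0 z ×ˢ Set.Icc 0 (1 - z)))

lemma binH_eq (q : ℝ) : binH q = Real.binEntropy q / Real.log 2 := by
  simp only [binH, Real.binEntropy, Real.logb, Real.log_inv]
  ring

lemma binH_le_one (q : ℝ) : binH q ≤ 1 := by
  rw [binH_eq, div_le_one (Real.log_pos (by norm_num))]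
  exact Real.binEntropy_le_log_two

lemma binH_concave : ConcaveOn ℝ (Set.Icc (0:ℝ) 1) binH := by
  have h1 : ConcaveOn ℝ (Set.Icc (0:ℝ) 1) Real.binEntropy :=
    Real.strictConcave_binEntropy.concaveOn
  have h2 := h1.smul (c := (Real.log 2)⁻¹)
    (by positivity : (0:ℝ) ≤ (Real.log 2)⁻¹)
  have : binH = (Real.log 2)⁻¹ • Real.binEntropy := by
    funext q
    simp [binH_eq, div_eq_inv_mul]
  rw [this]
  exact h2

/-- Perspective-type concavity lemma. -/
lemma persp (h : ℝ → ℝ) (hc : ConcaveOn ℝ (Set.Icc (0:ℝ) 1) h)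
    {p0 p1 d0 d1 a b : ℝ} (hp0 : 0 ≤ p0) (hp1 : 0 ≤ p1)
    (hd0 : 0 ≤ d0) (hd0' : d0 ≤ p0) (hd1 : 0 ≤ d1) (hd1' : d1 ≤ p1)
    (ha : 0 ≤ a) (hb : 0 ≤ b) (hab : a + b = 1) :
    a * (p0 * h (d0 / p0)) + b * (p1 * h (d1 / p1))
      ≤ (a * p0 + b * p1) * h ((a * d0 + b * d1) / (a * p0 + b * p1)) := by
  rcases eq_or_lt_of_le ha with rfl | ha'
  · have hb1 : b = 1 := by linarith
    subst hb1; simp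
  rcases eq_or_lt_of_le hb with rfl | hb'
  · have ha1 : a = 1 := by linarith
    subst ha1; simp
  rcases eq_or_lt_of_le hp0 with rfl | hp0'
  · have hd00 : d0 = 0 := le_antisymm hd0' hd0
    subst hd00
    rcases eq_or_lt_of_le hp1 with rfl | hp1'
    · have hd10 : d1 = 0 := le_antisymm hd1' hd1
      subst hd10; simp
    · rw [show a*0+b*d1 = b*d1 by ring, show a*0+b*p1 = b*p1 by ring,
          mul_div_mul_left d1 p1 (ne_of_gt hb')]
      linarith [le_refl (b * (p1 * h (d1 / p1)))]
  rcases eq_or_lt_of_le hp1 with rfl | hp1'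
  · have hd10 : d1 = 0 := le_antisymm hd1' hd1
    subst hd10
    rw [show a*d0+b*0 = a*d0 by ring, show a*p0+b*0 = a*p0 by ring,
        mul_div_mul_left d0 p0 (ne_of_gt ha')]
    linarith [le_refl (a * (p0 * h (d0 / p0)))]
  · have hp : 0 < a * p0 + b * p1 := by positivity
    have hu0 : d0 / p0 ∈ Set.Icc (0:ℝ) 1 :=
      ⟨div_nonneg hd0 hp0, div_le_one_of_le₀ hd0' hp0⟩
    have hu1 : d1 / p1 ∈ Set.Icc (0:ℝ) 1 :=
      ⟨div_nonneg hd1 hp1, div_le_one_of_le₀ hd1' hp1⟩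
    have ht : (0:ℝ) ≤ a * p0 / (a * p0 + b * p1) := by positivity
    have hs : (0:ℝ) ≤ b * p1 / (a * p0 + b * p1) := by positivity
    have hts : a * p0 / (a * p0 + b * p1) + b * p1 / (a * p0 + b * p1) = 1 := by
      field_simp
    have key := hc.2 hu0 hu1 ht hs hts
    simp only [smul_eq_mul] at key
    have harg : a * p0 / (a * p0 + b * p1) * (d0 / p0)
        + b * p1 / (a * p0 + b * p1) * (d1 / p1)
        = (a * d0 + b * d1) / (a * p0 + b * p1) := by
      field_simp
    rw [harg] at key
    have := mul_le_mul_of_nonneg_left key hp.le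
    calc a * (p0 * h (d0 / p0)) + b * (p1 * h (d1 / p1))
        = (a * p0 + b * p1) * (a * p0 / (a * p0 + b * p1) * h (d0 / p0)
            + b * p1 / (a * p0 + b * p1) * h (d1 / p1)) := by
          field_simp
      _ ≤ _ := this

lemma concave_flip (h : ℝ → ℝ) (hc : ConcaveOn ℝ (Set.Icc (0:ℝ) 1) h) :
    ConcaveOn ℝ (Set.Icc (0:ℝ) 1) (fun t => h (1 - t)) := by
  refine ⟨convex_Icc 0 1, ?_⟩
  intro x hx y hy a b ha hb hab
  have hx' : (1:ℝ) - x ∈ Set.Icc (0:ℝ) 1 := ⟨by linarith [hx.2], by linarith [hx.1]⟩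
  have hy' : (1:ℝ) - y ∈ Set.Icc (0:ℝ) 1 := ⟨by linarith [hy.2], by linarith [hy.1]⟩
  have := hc.2 hx' hy' ha hb hab
  simp only [smul_eq_mul] at this ⊢
  have harg : 1 - (a * x + b * y) = a * (1 - x) + b * (1 - y) := by
    linear_combination -hab
  rw [harg]
  exact this

lemma Treward_eq (h : ℝ → ℝ) (δ γ : ℝ) :
    Treward h δ γ = binH ((1 + δ - γ) / 2) + δ + γ - 1
      + ((1 + δ - γ) / 2) * h (δ / ((1 + δ - γ) / 2))
      + ((1 - δ + γ) / 2) * h (1 - γ / ((1 - δ + γ) / 2)) := by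
  have e1 : δ / ((1 + δ - γ) / 2) = 2 * δ / (1 + δ - γ) := by
    rw [div_div_eq_mul_div, mul_comm]
  have e2 : γ / ((1 - δ + γ) / 2) = 2 * γ / (1 - δ + γ) := by
    rw [div_div_eq_mul_div, mul_comm]
  rw [Treward, e1, e2]

/-- The key joint-concavity inequality for the reward. -/
lemma Treward_key (h : ℝ → ℝ) (hc : ConcaveOn ℝ (Set.Icc (0:ℝ) 1) h)
    {δ0 γ0 δ1 γ1 a b : ℝ}
    (hδ0 : 0 ≤ δ0) (hγ0 : 0 ≤ γ0) (hs0 : δ0 + γ0 ≤ 1)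
    (hδ1 : 0 ≤ δ1) (hγ1 : 0 ≤ γ1) (hs1 : δ1 + γ1 ≤ 1)
    (ha : 0 ≤ a) (hb : 0 ≤ b) (hab : a + b = 1) :
    a * Treward h δ0 γ0 + b * Treward h δ1 γ1
      ≤ Treward h (a * δ0 + b * δ1) (a * γ0 + b * γ1) := by
  have e1 : (1 + (a * δ0 + b * δ1) - (a * γ0 + b * γ1)) / 2
      = a * ((1 + δ0 - γ0) / 2) + b * ((1 + δ1 - γ1) / 2) := by
    linear_combination -hab / 2
  have e2 : (1 - (a * δ0 + b * δ1) + (a * γ0 + b * γ1)) / 2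
      = a * ((1 - δ0 + γ0) / 2) + b * ((1 - δ1 + γ1) / 2) := by
    linear_combination -hab / 2
  rw [Treward_eq, Treward_eq, Treward_eq, e1, e2]
  -- membership facts
  have hp0 : (1 + δ0 - γ0) / 2 ∈ Set.Icc (0:ℝ) 1 := by
    constructor <;> [nlinarith; nlinarith]
  have hp1 : (1 + δ1 - γ1) / 2 ∈ Set.Icc (0:ℝ) 1 := by
    constructor <;> [nlinarith; nlinarith]
  -- binH part
  have hB := binH_concave.2 hp0 hp1 ha hb hab
  simp only [smul_eq_mul] at hB
  -- first perspective part
  have hP := persp h hc (p0 := (1 + δ0 - γ0)/2) (p1 := (1 + δ1 - γ1)/2)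
      (d0 := δ0) (d1 := δ1) hp0.1 hp1.1 hδ0 (by linarith) hδ1 (by linarith) ha hb hab
  -- second perspective part, with the flipped function
  have hQ := persp (fun t => h (1 - t)) (concave_flip h hc)
      (p0 := (1 - δ0 + γ0)/2) (p1 := (1 - δ1 + γ1)/2)
      (d0 := γ0) (d1 := γ1) (by nlinarith) (by nlinarith)
      hγ0 (by linarith) hγ1 (by linarith) ha hb hab
  linarith [hB, hP, hQ]

lemma exists_ub (h : ℝ → ℝ) (hc : ConcaveOn ℝ (Set.Icc (0:ℝ) 1) h) :
    ∃ M : ℝ, ∀ x ∈ Set.Icc (0:ℝ) 1, h x ≤ M := by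
  refine ⟨2 * h (1/2) - min (h 0) (h 1), ?_⟩
  intro x hx
  have hx' : (1:ℝ) - x ∈ Set.Icc (0:ℝ) 1 := ⟨by linarith [hx.2], by linarith [hx.1]⟩
  have h0 : (0:ℝ) ∈ Set.Icc (0:ℝ) 1 := by norm_num
  have h1 : (1:ℝ) ∈ Set.Icc (0:ℝ) 1 := by norm_num
  have hlow := hc.2 h0 h1 hx.1 hx'.1 (by ring)
  simp only [smul_eq_mul, mul_zero, mul_one, zero_add] at hlow
  -- hlow : x * h 0 + (1-x) * h 1 ≤ h (1 - x)
  have hmin : min (h 0) (h 1) ≤ h (1 - x) := by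
    have l0 : min (h 0) (h 1) ≤ h 0 := min_le_left _ _
    have l1 : min (h 0) (h 1) ≤ h 1 := min_le_right _ _
    nlinarith [hx.1, hx'.1]
  have hmid := hc.2 hx hx' (by norm_num : (0:ℝ) ≤ 1/2) (by norm_num : (0:ℝ) ≤ 1/2)
      (by norm_num)
  simp only [smul_eq_mul] at hmid
  have harg : (1:ℝ)/2 * x + 1/2 * (1 - x) = 1/2 := by ring
  rw [harg] at hmid
  linarith

lemma Treward_le (h : ℝ → ℝ) {M : ℝ} (hM : ∀ x ∈ Set.Icc (0:ℝ) 1, h x ≤ M)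
    {δ γ : ℝ} (hδ : 0 ≤ δ) (hγ : 0 ≤ γ) (hs : δ + γ ≤ 1) :
    Treward h δ γ ≤ 1 + M := by
  have harg1 : 2 * δ / (1 + δ - γ) ∈ Set.Icc (0:ℝ) 1 :=
    ⟨div_nonneg (by linarith) (by linarith),
     div_le_one_of_le₀ (by linarith) (by linarith)⟩
  have harg2 : 1 - 2 * γ / (1 - δ + γ) ∈ Set.Icc (0:ℝ) 1 := by
    have q1 : (0:ℝ) ≤ 2 * γ / (1 - δ + γ) :=
      div_nonneg (by linarith) (by linarith)
    have q2 : 2 * γ / (1 - δ + γ) ≤ 1 :=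
      div_le_one_of_le₀ (by linarith) (by linarith)
    exact ⟨by linarith, by linarith⟩
  have b1 := binH_le_one ((1 + δ - γ) / 2)
  have t1 : ((1 + δ - γ) / 2) * h (2 * δ / (1 + δ - γ))
      ≤ ((1 + δ - γ) / 2) * M :=
    mul_le_mul_of_nonneg_left (hM _ harg1) (by linarith)
  have t2 : ((1 - δ + γ) / 2) * h (1 - 2 * γ / (1 - δ + γ))
      ≤ ((1 - δ + γ) / 2) * M :=
    mul_le_mul_of_nonneg_left (hM _ harg2) (by linarith)
  have hsum : ((1 + δ - γ) / 2) * M + ((1 - δ + γ) / 2) * M = M := by ring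
  rw [Treward]
  linarith

/-- The operator `T` retains concavity: if `h` is concave on `[0,1]`,
then so is `T h`. -/
theorem Tdp_concaveOn (h : ℝ → ℝ) (hc : ConcaveOn ℝ (Set.Icc (0 : ℝ) 1) h) :
    ConcaveOn ℝ (Set.Icc (0 : ℝ) 1) (Tdp h) := by
  obtain ⟨M, hM⟩ := exists_ub h hc
  set F : ℝ × ℝ → ℝ := fun p => Treward h p.1 p.2 with hF
  have hne : ∀ z ∈ Set.Icc (0:ℝ) 1,
      (F '' (Set.Icc 0 z ×ˢ Set.Icc 0 (1 - z))).Nonempty := by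
    intro z hz
    exact ⟨F (0, 0), ⟨(0, 0), ⟨⟨le_refl 0, hz.1⟩,
      ⟨le_refl 0, by show (0:ℝ) ≤ 1 - z; linarith [hz.2]⟩⟩, rfl⟩⟩
  have hbdd : ∀ z ∈ Set.Icc (0:ℝ) 1,
      BddAbove (F '' (Set.Icc 0 z ×ˢ Set.Icc 0 (1 - z))) := by
    intro z hz
    refine ⟨1 + M, ?_⟩
    rintro _ ⟨⟨δ, γ⟩, ⟨⟨hδ0, hδz⟩, ⟨hγ0, hγz⟩⟩, rfl⟩
    exact Treward_le h hM hδ0 hγ0 (by linarith)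
  refine ⟨convex_Icc 0 1, ?_⟩
  intro x hx y hy a b ha hb hab
  simp only [smul_eq_mul]
  have hz : a * x + b * y ∈ Set.Icc (0:ℝ) 1 := by
    have := (convex_Icc (0:ℝ) 1) hx hy ha hb hab
    simpa using this
  have main : ∀ s ∈ F '' (Set.Icc 0 x ×ˢ Set.Icc 0 (1 - x)),
      ∀ t ∈ F '' (Set.Icc 0 y ×ˢ Set.Icc 0 (1 - y)),
      a * s + b * t ≤ Tdp h (a * x + b * y) := by
    rintro _ ⟨⟨δ0, γ0⟩, ⟨⟨hδ00, hδ0x⟩, ⟨hγ00, hγ0x⟩⟩, rfl⟩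
    rintro _ ⟨⟨δ1, γ1⟩, ⟨⟨hδ10, hδ1y⟩, ⟨hγ10, hγ1y⟩⟩, rfl⟩
    dsimp only at hδ00 hδ0x hγ00 hγ0x hδ10 hδ1y hγ10 hγ1y ⊢
    have hkey := Treward_key h hc hδ00 hγ00 (by linarith [hx.2])
      hδ10 hγ10 (by linarith [hy.2]) ha hb hab
    have hmem : ((a * δ0 + b * δ1, a * γ0 + b * γ1) : ℝ × ℝ)
        ∈ Set.Icc 0 (a * x + b * y) ×ˢ Set.Icc 0 (1 - (a * x + b * y)) := by
      have m1 : a * δ0 ≤ a * x := mul_le_mul_of_nonneg_left hδ0x ha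
      have m2 : b * δ1 ≤ b * y := mul_le_mul_of_nonneg_left hδ1y hb
      have m3 : a * γ0 ≤ a * (1 - x) := mul_le_mul_of_nonneg_left hγ0x ha
      have m4 : b * γ1 ≤ b * (1 - y) := mul_le_mul_of_nonneg_left hγ1y hb
      simp only [Set.mem_prod, Set.mem_Icc]
      refine ⟨⟨by positivity, by linarith⟩, by positivity, by nlinarith⟩
    have hle : F (a * δ0 + b * δ1, a * γ0 + b * γ1) ≤ Tdp h (a * x + b * y) :=
      le_csSup (hbdd _ hz) ⟨_, hmem, rfl⟩
    exact le_trans hkey hle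
  rcases eq_or_lt_of_le ha with rfl | ha'
  · have hb1 : b = 1 := by linarith
    subst hb1
    simp
  rcases eq_or_lt_of_le hb with rfl | hb'
  · have ha1 : a = 1 := by linarith
    subst ha1
    simp
  have step : Tdp h x ≤ (Tdp h (a * x + b * y) - b * Tdp h y) / a := by
    rw [Tdp]
    apply csSup_le (hne x hx)
    intro s hs
    rw [le_div_iff₀ ha']
    have step2 : Tdp h y ≤ (Tdp h (a * x + b * y) - a * s) / b := by
      rw [Tdp]
      apply csSup_le (hne y hy)
      intro t ht
      rw [le_div_iff₀ hb']
      have := main s hs t ht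
      linarith
    have := (le_div_iff₀ hb').mp step2
    linarith
  have := (le_div_iff₀ ha').mp step
  linarith
end

section
/- The operator T preserves symmetry about 1/2: if h:[0,1]→ℝ is bounded and satisfies h(z) = h(1−z) for all z∈[0,1], then (Th)(z) = (Th)(1−z) for all z∈[0,1]. -/
lemma binH_symm (q : ℝ) : binH q = binH (1 - q) := by
  unfold binH
  rw [sub_sub_cancel]
  ring

lemma key_aux (h : ℝ → ℝ) (hsym : ∀ z ∈ Set.Icc (0 : ℝ) 1, h z = h (1 - z))
    (a x : ℝ) (hx0 : 0 ≤ x) (hxa : x ≤ a) :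
    (a / 2) * h (x / a) = (a / 2) * h (1 - x / a) := by
  rcases eq_or_lt_of_le (le_trans hx0 hxa) with ha | ha
  · rw [← ha]; simp
  · rw [hsym (x / a) ⟨div_nonneg hx0 ha.le, (div_le_one ha).mpr hxa⟩]

lemma Treward_swap (h : ℝ → ℝ) (hsym : ∀ z ∈ Set.Icc (0 : ℝ) 1, h z = h (1 - z))
    (δ γ : ℝ) (hδ : 0 ≤ δ) (hγ : 0 ≤ γ) (hs : δ + γ ≤ 1) :
    Treward h δ γ = Treward h γ δ := by
  unfold Treward
  have e1 : (1 : ℝ) - δ + γ = 1 + γ - δ := by ring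
  have e2 : (1 : ℝ) - γ + δ = 1 + δ - γ := by ring
  rw [e1, e2]
  have h1 : binH ((1 + δ - γ) / 2) = binH ((1 + γ - δ) / 2) := by
    rw [binH_symm ((1 + δ - γ) / 2)]
    ring_nf
  have hA : ((1 + δ - γ) / 2) * h (2 * δ / (1 + δ - γ))
      = ((1 + δ - γ) / 2) * h (1 - 2 * δ / (1 + δ - γ)) :=
    key_aux h hsym _ _ (by linarith) (by linarith)
  have hB : ((1 + γ - δ) / 2) * h (2 * γ / (1 + γ - δ))
      = ((1 + γ - δ) / 2) * h (1 - 2 * γ / (1 + γ - δ)) :=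
    key_aux h hsym _ _ (by linarith) (by linarith)
  linarith [hA, hB, h1]

/-- The operator `T` preserves symmetry about `1/2`: if `h` is bounded on `[0,1]` and
`h z = h (1 - z)` for all `z ∈ [0,1]`, then `(T h) z = (T h) (1 - z)` for all `z ∈ [0,1]`. -/
theorem Tdp_symmetric (h : ℝ → ℝ)
    (hb : ∃ M : ℝ, ∀ z ∈ Set.Icc (0 : ℝ) 1, |h z| ≤ M)
    (hsym : ∀ z ∈ Set.Icc (0 : ℝ) 1, h z = h (1 - z)) :
    ∀ z ∈ Set.Icc (0 : ℝ) 1, Tdp h z = Tdp h (1 - z) := by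
  intro z hz
  obtain ⟨hz0, hz1⟩ := hz
  unfold Tdp
  rw [sub_sub_cancel]
  congr 1
  ext y
  simp only [Set.mem_image, Set.mem_prod, Set.mem_Icc, Prod.exists]
  constructor
  · rintro ⟨δ, γ, ⟨⟨hδ0, hδ⟩, hγ0, hγ⟩, rfl⟩
    exact ⟨γ, δ, ⟨⟨hγ0, hγ⟩, hδ0, hδ⟩,
      (Treward_swap h hsym δ γ hδ0 hγ0 (by linarith)).symm⟩
  · rintro ⟨δ, γ, ⟨⟨hδ0, hδ⟩, hγ0, hγ⟩, rfl⟩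
    exact ⟨γ, δ, ⟨⟨hγ0, hγ⟩, hδ0, hδ⟩,
      (Treward_swap h hsym δ γ hδ0 hγ0 (by linarith)).symm⟩
end

section
/- Consider a feasible trapdoor-channel trajectory whose action sequence x̃ contains no two consecutive 1's (no index k with x̃_k = x̃_{k+1} = 1). Then for every k with 1 ≤ k < N: (1) if ỹ_{k+1} = 0 then x̃_k = 0; (2) if x̃_{k+1} = 1 then x̃_k = 0; (3) if ỹ_{k+1} = 1 and x̃_{k+1} = 0 then x̃_k = 1. Equivalently, x̃_k = 1 if and only if ỹ_{k+1} = 1 and x̃_{k+1} = 0. -/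
/-- Backward decoding rules for the trapdoor channel scheme.  Given a feasible
trapdoor-channel trajectory (`y t ∈ {x t, s (t-1)}` and `s t = s (t-1) + x t + y t`,
all in `ZMod 2`), with action sequence `xt t = x t + s (t-1)` containing no two
consecutive 1's, and differential outputs `yt t = y t + y (t-1)` for `t ≥ 2`:
for `1 ≤ k < N`, (1) `yt (k+1) = 0 → xt k = 0`; (2) `xt (k+1) = 1 → xt k = 0`;
(3) `yt (k+1) = 1 → xt (k+1) = 0 → xt k = 1`; equivalently
`xt k = 1 ↔ (yt (k+1) = 1 ∧ xt (k+1) = 0)`. -/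
theorem trapdoor_backward_decoding (N : ℕ) (s x y : ℕ → ZMod 2)
    (hfeas : ∀ t, 1 ≤ t → t ≤ N →
      (y t = x t ∨ y t = s (t - 1)) ∧ s t = s (t - 1) + x t + y t)
    (xt yt : ℕ → ZMod 2)
    (hxt : ∀ t, 1 ≤ t → t ≤ N → xt t = x t + s (t - 1))
    (hyt : ∀ t, 2 ≤ t → t ≤ N → yt t = y t + y (t - 1))
    (hnorep : ∀ k, 1 ≤ k → k < N → ¬(xt k = 1 ∧ xt (k + 1) = 1)) :
    ∀ k, 1 ≤ k → k < N →
      (yt (k + 1) = 0 → xt k = 0) ∧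
      (xt (k + 1) = 1 → xt k = 0) ∧
      (yt (k + 1) = 1 → xt (k + 1) = 0 → xt k = 1) ∧
      (xt k = 1 ↔ (yt (k + 1) = 1 ∧ xt (k + 1) = 0)) :=  by
  intro k hk1 hkN
  have h1 := hfeas k hk1 hkN.le
  have h2 := hfeas (k + 1) (by omega) (by omega)
  have hx1 := hxt k hk1 hkN.le
  have hx2 := hxt (k + 1) (by omega) (by omega)
  have hy2 := hyt (k + 1) (by omega) (by omega)
  have hnr := hnorep k hk1 hkN
  simp only [Nat.add_sub_cancel] at h2 hx2 hy2
  obtain ⟨h1a, h1b⟩ := h1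
  obtain ⟨h2a, h2b⟩ := h2
  revert h1a h1b h2a h2b hx1 hx2 hy2 hnr
  generalize s (k - 1) = a
  generalize x k = b
  generalize y k = c
  generalize s k = d
  generalize x (k + 1) = e
  generalize y (k + 1) = f
  generalize s (k + 1) = g
  generalize xt k = p
  generalize xt (k + 1) = q
  generalize yt (k + 1) = r
  revert a b c d e f g p q r
  decide
end

section
/- The encoding scheme for the trapdoor channel with feedback is zero-error: if two feasible trapdoor-channel trajectories of length N have the same initial state s_0 and the same output sequence y_1,…,y_N, and both of their action sequences contain no two consecutive 1's and end with x̃_N = 0, then the two action sequences are identical (and consequently the input and state sequences are identical). -/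
/-- Zero-error property of the trapdoor-channel feedback scheme: two feasible
trapdoor-channel trajectories (`y t ∈ {x t, s (t-1)}`, `s t = s (t-1) + x t + y t`,
all in `ZMod 2`) of length `N` with the same initial state and the same output
sequence, whose action sequences `t ↦ x t + s (t-1)` have no two consecutive 1's
and end with action 0, have identical action sequences — and consequently identical
input and state sequences. -/
theorem trapdoor_scheme_zero_error (N : ℕ) (hN : 1 ≤ N)
    (s x s' x' y : ℕ → ZMod 2)
    (hfeas : ∀ t, 1 ≤ t → t ≤ N →
      (y t = x t ∨ y t = s (t - 1)) ∧ s t = s (t - 1) + x t + y t)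
    (hfeas' : ∀ t, 1 ≤ t → t ≤ N →
      (y t = x' t ∨ y t = s' (t - 1)) ∧ s' t = s' (t - 1) + x' t + y t)
    (hs0 : s 0 = s' 0)
    (hnorep : ∀ k, 1 ≤ k → k < N →
      ¬(x k + s (k - 1) = 1 ∧ x (k + 1) + s k = 1))
    (hnorep' : ∀ k, 1 ≤ k → k < N →
      ¬(x' k + s' (k - 1) = 1 ∧ x' (k + 1) + s' k = 1))
    (hlast : x N + s (N - 1) = 0) (hlast' : x' N + s' (N - 1) = 0) :
    (∀ t, 1 ≤ t → t ≤ N → x t + s (t - 1) = x' t + s' (t - 1)) ∧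
    (∀ t, t ≤ N → s t = s' t) ∧
    (∀ t, 1 ≤ t → t ≤ N → x t = x' t) := by
  have hz : ∀ a : ZMod 2, a ≠ 1 → a = 0 := by decide
  have hcancel : ∀ a b : ZMod 2, a + b = 0 → a = b := by decide
  have hsolve : ∀ a b c : ZMod 2, a + b = c → a = c + b := by decide
  -- state recursion in terms of actions
  have act : ∀ t, 1 ≤ t → t ≤ N → s t = (x t + s (t - 1)) + y t := by
    intro t h1 h2
    rw [(hfeas t h1 h2).2]; ring
  have act' : ∀ t, 1 ≤ t → t ≤ N → s' t = (x' t + s' (t - 1)) + y t := by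
    intro t h1 h2
    rw [(hfeas' t h1 h2).2]; ring
  -- if the action is 0, the output equals the previous state
  have out0 : ∀ t, 1 ≤ t → t ≤ N → x t + s (t - 1) = 0 → y t = s (t - 1) := by
    intro t h1 h2 h0
    rcases (hfeas t h1 h2).1 with h | h
    · rw [h, hcancel _ _ h0]
    · exact h
  have out0' : ∀ t, 1 ≤ t → t ≤ N → x' t + s' (t - 1) = 0 → y t = s' (t - 1) := by
    intro t h1 h2 h0
    rcases (hfeas' t h1 h2).1 with h | h
    · rw [h, hcancel _ _ h0]
    · exact h
  -- backward induction: all states agree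
  have main : ∀ k, s (N - k) = s' (N - k) := by
    intro k
    induction k with
    | zero =>
        simp only [Nat.sub_zero]
        rw [act N hN le_rfl, act' N hN le_rfl, hlast, hlast']
    | succ k ih =>
        by_cases hu : N ≤ k
        · have h1 : N - k = 0 := Nat.sub_eq_zero_of_le hu
          have h2 : N - (k + 1) = 0 := Nat.sub_eq_zero_of_le (le_trans hu (Nat.le_succ k))
          rw [h2]; rw [h1] at ih; exact ih
        · push_neg at hu
          set u := N - k with hudef
          have hu1 : 1 ≤ u := by omega
          have hu2 : u ≤ N := by omega
          have hueq : N - (k + 1) = u - 1 := by omega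
          rw [hueq]
          have haa' : x u + s (u - 1) = x' u + s' (u - 1) := by
            have h1 := act u hu1 hu2
            have h2 := act' u hu1 hu2
            rw [ih] at h1
            exact add_right_cancel (h1.symm.trans h2)
          by_cases ha : x u + s (u - 1) = 1
          · by_cases h1 : u = 1
            · rw [h1]; simpa using hs0
            · have hv1 : 1 ≤ u - 1 := by omega
              have hv2 : u - 1 < N := by omega
              have hsucc : u - 1 + 1 = u := by omega
              have hb : x (u - 1) + s (u - 1 - 1) = 0 := by
                apply hz
                intro hc
                exact hnorep (u - 1) hv1 hv2 ⟨hc, by rw [hsucc]; exact ha⟩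
              have hb' : x' (u - 1) + s' (u - 1 - 1) = 0 := by
                apply hz
                intro hc
                exact hnorep' (u - 1) hv1 hv2 ⟨hc, by rw [hsucc]; exact haa' ▸ ha⟩
              rw [act (u - 1) hv1 (by omega), act' (u - 1) hv1 (by omega), hb, hb']
          · have ha0 : x u + s (u - 1) = 0 := hz _ ha
            have ha0' : x' u + s' (u - 1) = 0 := haa' ▸ ha0
            rw [← out0 u hu1 hu2 ha0, ← out0' u hu1 hu2 ha0']
  have sfinal : ∀ t, t ≤ N → s t = s' t := by
    intro t ht
    have := main (N - t)
    rwa [Nat.sub_sub_self ht] at this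
  have actfinal : ∀ t, 1 ≤ t → t ≤ N → x t + s (t - 1) = x' t + s' (t - 1) := by
    intro t h1 h2
    have ha := act t h1 h2
    have hb := act' t h1 h2
    rw [sfinal t h2] at ha
    exact add_right_cancel (ha.symm.trans hb)
  refine ⟨actfinal, sfinal, ?_⟩
  intro t h1 h2
  have := hsolve _ _ _ (actfinal t h1 h2)
  rw [this, sfinal (t - 1) (by omega)]
  exact (hsolve _ _ _ rfl).symm
end

section
/- The conjectured differential value function satisfies the fixed-point functional equation on [b3,b4]: for every z∈[b3,b4], h̃(z) = H(((√5+1)/4)·z) − ((3−√5)/2)·z − ρ̃ + ((√5+1)/4)·z·h̃(3−√5) + (1 − ((√5+1)/4)·z)·h̃((1−z)/(1 − ((√5+1)/4)·z)), where the argument (1−z)/(1 − ((√5+1)/4)·z) lies in [b1,b4] so that h̃ is defined there, and h̃(3−√5) = ρ̃ + √5 − 2. -/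
noncomputable def b1 : ℝ := Real.sqrt 5 - 2
noncomputable def b2 : ℝ := (3 - Real.sqrt 5) / 2
noncomputable def b3 : ℝ := (Real.sqrt 5 - 1) / 2
noncomputable def b4 : ℝ := 3 - Real.sqrt 5

/-- The conjectured optimal average reward, `log₂` of the golden ratio. -/
noncomputable def ρt : ℝ := Real.logb 2 ((1 + Real.sqrt 5) / 2)

/-- The conjectured differential value function on `[b1, b4]`. -/
noncomputable def htilde (z : ℝ) : ℝ :=
  if z ≤ b2 then binH z - ρt * z + Real.logb 2 (Real.sqrt 5 - 1)
  else if z ≤ b3 then 1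
  else binH z + ρt * z + Real.logb 2 (3 - Real.sqrt 5)

/-!
On `[b3, b4]` the function `h̃` is given by its third branch (the branches agree at `b3`), and
with `a = (√5 + 1)/4 = φ/2` the map `z ↦ w = (1 - z)/(1 - a z)` sends `[b3, b4]` to itself. The
grouping rule of entropy, `H(a z) + (1 - a z) H(w) = H(z) + z H(a)`, turns the equation into an
identity linear in `z`. It holds because every constant involved is a power of `φ` times a power
of `2` (`b3 = φ⁻¹`, `1 - b3 = φ⁻²`, `3 - √5 = 2 φ⁻²`, `√5 - 2 = φ⁻³`, `a = φ/2`, `1 - a = φ⁻²/2`),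
so its `log₂` is an integer combination of `1` and `ρ̃ = log₂ φ`.
-/

open Real goldenRatio

noncomputable def entropy3 (p q : ℝ) : ℝ :=
  -p * logb 2 p - q * logb 2 q - (1 - p - q) * logb 2 (1 - p - q)

lemma binH_one_sub (p : ℝ) : binH (1 - p) = binH p := by
  unfold binH
  rw [sub_sub_cancel]
  ring

lemma entropy3_comm (p q : ℝ) : entropy3 p q = entropy3 q p := by
  unfold entropy3
  rw [sub_right_comm 1 p q]
  ring

lemma binH_add_mul_binH_div {p q : ℝ} (hp : p ≠ 1) (hq : q ≠ 0) (hpq : p + q ≠ 1) :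
    binH p + (1 - p) * binH (q / (1 - p)) = entropy3 p q := by
  have hp1 : 1 - p ≠ 0 := sub_ne_zero.mpr hp.symm
  have hr : 1 - p - q ≠ 0 := by rwa [sub_sub, sub_ne_zero, ne_comm]
  have hrest : 1 - q / (1 - p) = (1 - p - q) / (1 - p) := by field_simp
  unfold binH entropy3
  rw [hrest, logb_div hq hp1, logb_div hr hp1]
  field_simp
  ring

/-- Both sides are the entropy of `(a z, 1 - z, (1 - a) z)`, grouped in two ways. -/
lemma binH_mul_add_mul_binH {a z : ℝ} (ha₀ : a ≠ 0) (ha₁ : a ≠ 1) (hz₀ : z ≠ 0) (hz₁ : z ≠ 1)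
    (haz : a * z ≠ 1) :
    binH (a * z) + (1 - a * z) * binH ((1 - z) / (1 - a * z)) = binH z + z * binH a := by
  have hsum : a * z + (1 - z) ≠ 1 := by
    intro h
    exact ha₁ (mul_right_cancel₀ hz₀ (by linear_combination h))
  rw [binH_add_mul_binH_div haz (sub_ne_zero.mpr hz₁.symm) hsum, entropy3_comm,
    ← binH_add_mul_binH_div (by simpa using hz₀) (mul_ne_zero ha₀ hz₀) (by rwa [add_comm]),
    binH_one_sub, sub_sub_cancel, mul_div_cancel_right₀ a hz₀]

lemma logb_two_goldenRatio_zpow (n : ℤ) : logb 2 (φ ^ n) = n * ρt := by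
  rw [ρt, logb, log_zpow, logb]
  ring

lemma goldenRatio_zpow_neg (n : ℕ) : φ ^ (-(n : ℤ)) = ((√5 - 1) / 2) ^ n := by
  rw [zpow_neg, zpow_natCast, ← inv_pow, inv_goldenRatio, goldenConj]
  ring

lemma sqrt_five_sq : √5 ^ 2 = 5 := sq_sqrt (by norm_num)

lemma two_lt_sqrt_five : 2 < √5 := by
  rw [lt_sqrt] <;> norm_num

lemma sqrt_five_lt_three : √5 < 3 := by
  rw [sqrt_lt'] <;> norm_num

lemma logb_two_three_sub_sqrt_five : logb 2 (3 - √5) = 1 - 2 * ρt := by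
  have h : 3 - √5 = 2 * φ ^ (-(2 : ℕ) : ℤ) := by
    rw [goldenRatio_zpow_neg]; linear_combination (-1/2 : ℝ) * sqrt_five_sq
  rw [h, logb_mul two_ne_zero (by positivity), logb_self_eq_one one_lt_two,
    logb_two_goldenRatio_zpow]
  push_cast; ring

lemma logb_two_sqrt_five_sub_two : logb 2 (√5 - 2) = -3 * ρt := by
  have h : √5 - 2 = φ ^ (-(3 : ℕ) : ℤ) := by
    rw [goldenRatio_zpow_neg]; linear_combination (3 - √5) / 8 * sqrt_five_sq
  rw [h, logb_two_goldenRatio_zpow]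
  push_cast; ring

lemma logb_two_b3 : logb 2 b3 = -ρt := by
  have h : b3 = φ ^ (-(1 : ℕ) : ℤ) := by
    rw [goldenRatio_zpow_neg, b3]; ring
  rw [h, logb_two_goldenRatio_zpow]
  push_cast; ring

lemma logb_two_one_sub_b3 : logb 2 (1 - b3) = -2 * ρt := by
  have h : 1 - b3 = φ ^ (-(2 : ℕ) : ℤ) := by
    rw [goldenRatio_zpow_neg, b3]; linear_combination (-1/4 : ℝ) * sqrt_five_sq
  rw [h, logb_two_goldenRatio_zpow]
  push_cast; ring

lemma binH_goldenRatio_div_two : binH ((√5 + 1) / 4) = 1 + 2 * ρt - 3 * ((√5 + 1) / 4) * ρt := by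
  have h₁ : (√5 + 1) / 4 = φ ^ (1 : ℤ) / 2 := by rw [zpow_one]; ring
  have h₂ : 1 - (√5 + 1) / 4 = φ ^ (-(2 : ℕ) : ℤ) / 2 := by
    rw [goldenRatio_zpow_neg]; linear_combination (-1/8 : ℝ) * sqrt_five_sq
  have hφ : ∀ n : ℤ, φ ^ n ≠ 0 := fun n => zpow_ne_zero n goldenRatio_ne_zero
  unfold binH
  rw [h₂, logb_div (hφ _) two_ne_zero, ← h₂, h₁, logb_div (hφ _) two_ne_zero, ← h₁,
    logb_two_goldenRatio_zpow, logb_two_goldenRatio_zpow, logb_self_eq_one one_lt_two]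
  push_cast; ring

lemma b2_lt_b3 : b2 < b3 := by
  unfold b2 b3; linarith [two_lt_sqrt_five]

lemma b1_le_b3 : b1 ≤ b3 := by
  unfold b1 b3; linarith [sqrt_five_lt_three]

lemma b3_le_b4 : b3 ≤ b4 := by
  unfold b3 b4; nlinarith [sqrt_five_sq, two_lt_sqrt_five]

lemma htilde_of_mem_Icc {z : ℝ} (hz : z ∈ Set.Icc b3 b4) :
    htilde z = binH z + ρt * z + logb 2 (3 - √5) := by
  unfold htilde
  rw [if_neg (b2_lt_b3.trans_le hz.1).not_ge]
  split_ifs with h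
  · obtain rfl : z = b3 := le_antisymm h hz.1
    unfold binH
    rw [logb_two_b3, logb_two_one_sub_b3, logb_two_three_sub_sqrt_five]
    ring
  · rfl

lemma htilde_three_sub_sqrt_five : htilde (3 - √5) = ρt + √5 - 2 := by
  rw [htilde_of_mem_Icc (z := 3 - √5) ⟨b3_le_b4, le_rfl⟩]
  unfold binH
  rw [show 1 - (3 - √5) = √5 - 2 by ring, logb_two_sqrt_five_sub_two, logb_two_three_sub_sqrt_five]
  ring

lemma one_sub_div_one_sub_mul_mem_Icc {z : ℝ} (hz : z ∈ Set.Icc b3 b4) :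
    (1 - z) / (1 - (√5 + 1) / 4 * z) ∈ Set.Icc b3 b4 := by
  obtain ⟨hz₁, hz₂⟩ := hz
  unfold b3 b4 at *
  have hu : 0 < 1 - (√5 + 1) / 4 * z := by nlinarith [sqrt_five_sq]
  constructor
  · rw [le_div_iff₀ hu]; nlinarith [sqrt_five_sq]
  · rw [div_le_iff₀ hu]; nlinarith [sqrt_five_sq]

/-- The conjectured differential value function satisfies the fixed-point functional
equation on `[b3, b4]`, where the argument `(1-z)/(1 - ((√5+1)/4)z)` lies in `[b1, b4]`,
and `h̃(3-√5) = ρ̃ + √5 - 2`. -/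
theorem htilde_fixed_point_equation :
    (∀ z ∈ Set.Icc b3 b4,
      (1 - z) / (1 - ((Real.sqrt 5 + 1) / 4) * z) ∈ Set.Icc b1 b4 ∧
      htilde z = binH (((Real.sqrt 5 + 1) / 4) * z) - ((3 - Real.sqrt 5) / 2) * z - ρt
        + ((Real.sqrt 5 + 1) / 4) * z * htilde (3 - Real.sqrt 5)
        + (1 - ((Real.sqrt 5 + 1) / 4) * z)
            * htilde ((1 - z) / (1 - ((Real.sqrt 5 + 1) / 4) * z))) ∧
    htilde (3 - Real.sqrt 5) = ρt + Real.sqrt 5 - 2 := by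
  refine ⟨fun z hz => ?_, htilde_three_sub_sqrt_five⟩
  have hw := one_sub_div_one_sub_mul_mem_Icc hz
  refine ⟨⟨b1_le_b3.trans hw.1, hw.2⟩, ?_⟩
  have hz₀ : 0 < z := by unfold b3 at hz; linarith [hz.1, two_lt_sqrt_five]
  have hz₁ : z < 1 := by unfold b4 at hz; linarith [hz.2, two_lt_sqrt_five]
  have ha : (√5 + 1) / 4 < 1 := by linarith [sqrt_five_lt_three]
  have haz : (√5 + 1) / 4 * z < 1 := by nlinarith
  have hu : 1 - (√5 + 1) / 4 * z ≠ 0 := by linarith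
  have hgroup := binH_mul_add_mul_binH (by positivity) ha.ne hz₀.ne' hz₁.ne haz.ne
  have hw_mul : (1 - (√5 + 1) / 4 * z) * ((1 - z) / (1 - (√5 + 1) / 4 * z)) = 1 - z :=
    mul_div_cancel₀ _ hu
  rw [htilde_of_mem_Icc hz, htilde_of_mem_Icc hw, htilde_three_sub_sqrt_five,
    logb_two_three_sub_sqrt_five]
  rw [binH_goldenRatio_div_two] at hgroup
  linear_combination -hgroup - ρt * hw_mul - z / 4 * sqrt_five_sq
end
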